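/- For every t ∈ {0,…,T−1} there exists a threshold φ(t) ∈ (K_t, ∞] (the exercise boundary) such that for every w ∈ [0,∞): if w ≥ φ(t) then v(t,w) = max(w − K_t, 0) (exercise is optimal), and if w < φ(t) then v(t,w) > max(w − K_t, 0) (continuation is strictly optimal). -/

import Mathlib

open MeasureTheory ProbabilityTheory Real

/-- Salary at integer time `t`: `L_t = L₀ · e^{μ_L t}`. -/
noncomputable def salary (L0 μL : ℝ) (t : ℕ) : ℝ := L0 * Real.exp (μL * t)

/-- The ABO `K_t = b · t · L_{t−1} · ä · e^{−r(T−t)}`. -/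
noncomputable def ABO (T : ℕ) (r b aT L0 μL : ℝ) (t : ℕ) : ℝ :=
  b * t * (L0 * Real.exp (μL * ((t : ℝ) - 1))) * aT * Real.exp (-r * ((T : ℝ) - (t : ℝ)))

/-- Auxiliary value function: `bermudanAux n w` is the value at time `t = T − n`
with `n` periods to go, defined by backward induction. -/
noncomputable def bermudanAux (T : ℕ) (r σ μL c b aT L0 : ℝ) : ℕ → ℝ → ℝ
  | 0, w => max (w - ABO T r b aT L0 μL T) 0
  | n + 1, w =>
      max (max (w - ABO T r b aT L0 μL (T - (n + 1))) 0)
        (Real.exp (-r) *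
          ∫ z, bermudanAux T r σ μL c b aT L0 n
              ((w + c * salary L0 μL (T - (n + 1))) * Real.exp (r - σ ^ 2 / 2 + σ * z))
            ∂(gaussianReal 0 1))

/-- The discrete-time value function of the Bermudan DB underpin option:
`v(T,w) = max(w − K_T, 0)` and for `t < T`,
`v(t,w) = max( max(w − K_t, 0), e^{−r} ∫ v(t+1, (w + c·L_t)·e^{r−σ²/2+σz}) γ(dz) )`. -/
noncomputable def bermudanValue (T : ℕ) (r σ μL c b aT L0 : ℝ) (t : ℕ) (w : ℝ) : ℝ :=
  bermudanAux T r σ μL c b aT L0 (T - t) w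


/-! The continuation value `C(w) = e^{-r} E[v(t+1, (w + c L_t) X)]`, where `E[X] = e^r`, is
1-Lipschitz because the payoff is and the property propagates through the backward induction.
Hence `w - C(w)` is nondecreasing, so the exercise region `{w ≥ 0 | C(w) + K_t ≤ w}` is an
up-set, closed by continuity, and `φ(t)` is its infimum (`⊤` if it is empty). Since `c L_t > 0`
and `X` is unbounded above, `C(w) > 0` for `w ≥ 0`; this forces `φ(t) > K_t` and makes
continuation strictly better than `max(w - K_t, 0)` below `φ(t)`. -/

noncomputable def continuationValue (r σ : ℝ) (f : ℝ → ℝ) (x : ℝ) : ℝ :=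
  exp (-r) * ∫ z, f (x * exp (r - σ ^ 2 / 2 + σ * z)) ∂gaussianReal 0 1

theorem LipschitzWith.integrable_comp {Ω E F : Type*} [MeasurableSpace Ω] {μ : Measure Ω}
    [IsFiniteMeasure μ] [NormedAddCommGroup E] [NormedAddCommGroup F] {K : NNReal} {f : E → F}
    (hf : LipschitzWith K f) {X : Ω → E} (hX : Integrable X μ) : Integrable (f ∘ X) μ := by
  refine ((integrable_const ‖f 0‖).add (hX.norm.const_mul K)).mono'
    (hf.continuous.comp_aestronglyMeasurable hX.1) (ae_of_all _ fun ω => ?_)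
  have h := hf.norm_sub_le (X ω) 0
  rw [sub_zero] at h
  have := norm_sub_norm_le (f (X ω)) (f 0)
  simp only [Function.comp_apply, Pi.add_apply]
  linarith

theorem integrable_exp_add_mul_gaussianReal (μ : ℝ) (v : NNReal) (a s : ℝ) :
    Integrable (fun z => exp (a + s * z)) (gaussianReal μ v) := by
  simp only [exp_add]
  exact (integrable_exp_mul_gaussianReal s).const_mul _

theorem integral_exp_sub_half_sq_add_mul_gaussianReal (r σ : ℝ) :
    ∫ z, exp (r - σ ^ 2 / 2 + σ * z) ∂gaussianReal 0 1 = exp r := by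
  have hmgf := congrFun (mgf_fun_id_gaussianReal (μ := 0) (v := 1)) σ
  rw [mgf] at hmgf
  simp only [exp_add, integral_const_mul]
  rw [hmgf, ← exp_add]
  congr 1
  push_cast
  ring

theorem LipschitzWith.integrable_comp_mul_exp_gaussianReal {K : NNReal} {f : ℝ → ℝ}
    (hf : LipschitzWith K f) (μ : ℝ) (v : NNReal) (x a s : ℝ) :
    Integrable (fun z => f (x * exp (a + s * z))) (gaussianReal μ v) :=
  hf.integrable_comp ((integrable_exp_add_mul_gaussianReal μ v a s).const_mul x)

theorem lipschitzWith_one_continuationValue {f : ℝ → ℝ} (hf : LipschitzWith 1 f) (r σ : ℝ) :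
    LipschitzWith 1 (continuationValue r σ f) := by
  refine LipschitzWith.of_dist_le_mul fun x₁ x₂ => ?_
  set Y := fun z : ℝ => exp (r - σ ^ 2 / 2 + σ * z)
  have hbound : ∀ z, ‖f (x₁ * Y z) - f (x₂ * Y z)‖ ≤ dist x₁ x₂ * Y z := fun z => by
    have hY : 0 < Y z := exp_pos _
    simpa [← sub_mul, abs_mul, abs_of_pos hY, Real.dist_eq] using
      hf.dist_le_mul (x₁ * Y z) (x₂ * Y z)
  have hint := norm_integral_le_of_norm_le
    ((integrable_exp_add_mul_gaussianReal 0 1 _ σ).const_mul (dist x₁ x₂)) (ae_of_all _ hbound)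
  rw [integral_const_mul, integral_exp_sub_half_sq_add_mul_gaussianReal,
    integral_sub (hf.integrable_comp_mul_exp_gaussianReal 0 1 x₁ _ σ)
      (hf.integrable_comp_mul_exp_gaussianReal 0 1 x₂ _ σ)]
    at hint
  calc dist (continuationValue r σ f x₁) (continuationValue r σ f x₂)
      = exp (-r) *
          ‖∫ z, f (x₁ * Y z) ∂gaussianReal 0 1 - ∫ z, f (x₂ * Y z) ∂gaussianReal 0 1‖ := by
        rw [Real.dist_eq, continuationValue, continuationValue, ← mul_sub, abs_mul,
          abs_of_pos (exp_pos _), Real.norm_eq_abs]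
    _ ≤ exp (-r) * (dist x₁ x₂ * exp r) := by gcongr
    _ = 1 * dist x₁ x₂ := by
        rw [mul_left_comm, ← exp_add, neg_add_cancel, exp_zero, mul_one, one_mul]

theorem lipschitzWith_one_continuationValue_add {f : ℝ → ℝ} (hf : LipschitzWith 1 f)
    (r σ s : ℝ) : LipschitzWith 1 fun w => continuationValue r σ f (w + s) := by
  simpa [Function.comp_def] using
    (lipschitzWith_one_continuationValue hf r σ).comp (isometry_add_right s).lipschitz

theorem continuationValue_pos {K : NNReal} {f : ℝ → ℝ} (hf : LipschitzWith K f) {k : ℝ}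
    (hpayoff : ∀ y, max (y - k) 0 ≤ f y) (r : ℝ) {σ : ℝ} (hσ : σ ≠ 0) {x : ℝ} (hx : 0 < x) :
    0 < continuationValue r σ f x := by
  have := (gaussianReal_absolutelyContinuous' 0 one_ne_zero).isOpenPosMeasure
  -- at `z₀` the lognormal argument equals `|k| + 1`, where the payoff is at least `1`
  set z₀ := (log ((|k| + 1) / x) - (r - σ ^ 2 / 2)) / σ
  have hz₀ : x * exp (r - σ ^ 2 / 2 + σ * z₀) = |k| + 1 := by
    rw [mul_div_cancel₀ _ hσ, add_sub_cancel, exp_log (by positivity), mul_div_cancel₀ _ hx.ne']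
  have hfz₀ : f (x * exp (r - σ ^ 2 / 2 + σ * z₀)) ≠ 0 := by
    have := hpayoff (x * exp (r - σ ^ 2 / 2 + σ * z₀))
    rw [hz₀] at this ⊢
    have hk : 0 < |k| + 1 - k := by linarith [le_abs_self k]
    exact (lt_of_lt_of_le (lt_max_of_lt_left hk) this).ne'
  refine mul_pos (exp_pos _) (integral_pos_of_integrable_nonneg_nonzero ?_
    (hf.integrable_comp_mul_exp_gaussianReal 0 1 x _ σ)
    (fun z => (le_max_right _ _).trans (hpayoff _)) hfz₀)
  exact hf.continuous.comp (by fun_prop)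

theorem bermudanAux_succ (T : ℕ) (r σ μL c b aT L0 : ℝ) (n : ℕ) (w : ℝ) :
    bermudanAux T r σ μL c b aT L0 (n + 1) w =
      max (max (w - ABO T r b aT L0 μL (T - (n + 1))) 0)
        (continuationValue r σ (bermudanAux T r σ μL c b aT L0 n)
          (w + c * salary L0 μL (T - (n + 1)))) :=
  rfl

theorem payoff_le_bermudanAux (T : ℕ) (r σ μL c b aT L0 : ℝ) (n : ℕ) (w : ℝ) :
    max (w - ABO T r b aT L0 μL (T - n)) 0 ≤ bermudanAux T r σ μL c b aT L0 n w := by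
  cases n with
  | zero => exact le_rfl
  | succ n => exact le_max_left _ _

theorem lipschitzWith_one_bermudanAux (T : ℕ) (r σ μL c b aT L0 : ℝ) (n : ℕ) :
    LipschitzWith 1 (bermudanAux T r σ μL c b aT L0 n) := by
  have hpayoff (K : ℝ) : LipschitzWith 1 fun w : ℝ => max (w - K) 0 := by
    simpa [sub_eq_add_neg] using (isometry_add_right (-K)).lipschitz.max_const 0
  induction n with
  | zero => exact hpayoff _
  | succ n ih =>
    rw [← max_self (1 : NNReal)]
    exact (hpayoff _).max (lipschitzWith_one_continuationValue_add ih r σ _)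

theorem exists_exercise_boundary {C : ℝ → ℝ} (hC : LipschitzWith 1 C)
    (hC_pos : ∀ w, 0 ≤ w → 0 < C w) (K : ℝ) :
    ∃ φ : EReal, (K : EReal) < φ ∧ ∀ w : ℝ, 0 ≤ w →
      (φ ≤ (w : EReal) → max (max (w - K) 0) (C w) = max (w - K) 0) ∧
      ((w : EReal) < φ → max (w - K) 0 < max (max (w - K) 0) (C w)) := by
  have exercise {w : ℝ} (hw : C w + K ≤ w) : max (max (w - K) 0) (C w) = max (w - K) 0 :=
    max_eq_left ((by linarith : C w ≤ w - K).trans (le_max_left _ _))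
  have continuation {w : ℝ} (hw₀ : 0 ≤ w) (hw : w < C w + K) :
      max (w - K) 0 < max (max (w - K) 0) (C w) :=
    lt_max_of_lt_right (max_lt (by linarith) (hC_pos w hw₀))
  set S := {w : ℝ | 0 ≤ w ∧ C w + K ≤ w}
  rcases S.eq_empty_or_nonempty with hS | hS
  · refine ⟨⊤, EReal.coe_lt_top K, fun w hw₀ => ⟨fun h => ?_, fun _ => ?_⟩⟩
    · exact absurd h (EReal.coe_lt_top w).not_ge
    · refine continuation hw₀ (lt_of_not_ge fun hw => ?_)
      exact hS.subset ⟨hw₀, hw⟩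
  -- the exercise region is closed and, since `w - C w` is nondecreasing, upward closed
  have hS_closed : IsClosed S :=
    isClosed_Ici.inter (isClosed_le (hC.continuous.add continuous_const) continuous_id)
  have hS_bdd : BddBelow S := ⟨0, fun w hw => hw.1⟩
  obtain ⟨hφ₀, hφ⟩ : sInf S ∈ S := hS_closed.csInf_mem hS hS_bdd
  refine ⟨(sInf S : ℝ), ?_, fun w hw₀ => ⟨fun h => exercise ?_, fun h => continuation hw₀ ?_⟩⟩
  · exact EReal.coe_lt_coe_iff.mpr (by linarith [hC_pos _ hφ₀])
  · have hle : sInf S ≤ w := EReal.coe_le_coe_iff.mp h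
    have := hC.le_add_mul w (sInf S)
    rw [Real.dist_eq, abs_of_nonneg (by linarith)] at this
    push_cast at this
    linarith
  · exact lt_of_not_ge fun hw => (EReal.coe_lt_coe_iff.mp h).not_ge (csInf_le hS_bdd ⟨hw₀, hw⟩)

theorem bermudanValue_exercise_boundary_general (T : ℕ) (r σ μL c b aT L0 : ℝ)
    (hσ : 0 < σ) (hc : 0 < c) (hL0 : 0 < L0) (t : ℕ) (ht : t < T) :
    ∃ φ : EReal, (ABO T r b aT L0 μL t : EReal) < φ ∧
      ∀ w : ℝ, 0 ≤ w →
        (φ ≤ (w : EReal) →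
          bermudanValue T r σ μL c b aT L0 t w = max (w - ABO T r b aT L0 μL t) 0) ∧
        ((w : EReal) < φ →
          max (w - ABO T r b aT L0 μL t) 0 < bermudanValue T r σ μL c b aT L0 t w) := by
  obtain ⟨n, hn⟩ : ∃ n, T - t = n + 1 := ⟨T - t - 1, by omega⟩
  have ht_eq : T - (n + 1) = t := by omega
  have hv (w : ℝ) : bermudanValue T r σ μL c b aT L0 t w =
      max (max (w - ABO T r b aT L0 μL t) 0)
        (continuationValue r σ (bermudanAux T r σ μL c b aT L0 n) (w + c * salary L0 μL t)) := by
    rw [bermudanValue, hn, bermudanAux_succ, ht_eq]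
  have hs : 0 < c * salary L0 μL t := mul_pos hc (mul_pos hL0 (exp_pos _))
  have hV := lipschitzWith_one_bermudanAux T r σ μL c b aT L0 n
  simp only [hv]
  exact exists_exercise_boundary (lipschitzWith_one_continuationValue_add hV r σ _)
    (fun w hw => continuationValue_pos hV (payoff_le_bermudanAux T r σ μL c b aT L0 n) r hσ.ne'
      (by linarith)) _

/-- For every `t ∈ {0,…,T−1}` there exists an exercise boundary `φ(t) ∈ (K_t, ∞]`
such that for every `w ∈ [0,∞)`: if `w ≥ φ(t)` then `v(t,w) = max(w − K_t, 0)`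
(exercise is optimal), and if `w < φ(t)` then `v(t,w) > max(w − K_t, 0)`
(continuation is strictly optimal). -/
theorem bermudanValue_exercise_boundary (T : ℕ) (hT : 1 ≤ T) (r σ μL c b aT L0 : ℝ)
    (hr : 0 ≤ r) (hσ : 0 < σ) (hμL : 0 ≤ μL) (hc : 0 < c) (hb : 0 < b)
    (haT : 0 < aT) (hL0 : 0 < L0) (t : ℕ) (ht : t < T) :
    ∃ φ : EReal, (ABO T r b aT L0 μL t : EReal) < φ ∧
      ∀ w : ℝ, 0 ≤ w →
        (φ ≤ (w : EReal) →
          bermudanValue T r σ μL c b aT L0 t w = max (w - ABO T r b aT L0 μL t) 0) ∧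
        ((w : EReal) < φ →
          max (w - ABO T r b aT L0 μL t) 0 < bermudanValue T r σ μL c b aT L0 t w) :=
  bermudanValue_exercise_boundary_general T r σ μL c b aT L0 hσ hc hL0 t ht
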